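/- arXiv:1112.3254 — 2 statements merged into one kernel-verified Lean document; each statement's English description precedes it below -/
import Mathlib

section
/- Let n ≥ 4 and let A_n be the split graph with stable set S = {s_1,…,s_n} and central clique K = {v_{ij} : 1≤i<j≤n}, where for all 1≤i<j≤n the neighbors of v_{ij} outside K are exactly s_i and s_j. Then the branch graph B(A_n/K) is the complete graph K_n on the vertex set {s_1,…,s_n}, and consequently A_n belongs to [n,2,1] but not to [n−1,2,1]. -/
open SimpleGraph

/-- `S` induces a path (a nonempty connected subgraph with maximum degree at most 2,
i.e. a subtree which is a path when `T` is a tree) in the graph `T`. -/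
def IsPathSet {W : Type*} (T : SimpleGraph W) (S : Set W) : Prop :=
  S.Nonempty ∧
  (∀ x ∈ S, ∀ y ∈ S, ∃ p : T.Walk x y, ∀ z ∈ p.support, z ∈ S) ∧
  (∀ x ∈ S, (T.neighborSet x ∩ S).ncard ≤ 2)

/-- A VPT-representation of `G` on host tree `T`: a family of paths of the tree `T`,
one for each vertex of `G`, such that two distinct vertices of `G` are adjacent iff
the corresponding paths share a vertex. -/
structure VPTRep {V W : Type*} (G : SimpleGraph V) (T : SimpleGraph W) where
  tree : T.IsTree
  path : V → Set W
  isPath : ∀ v, IsPathSet T (path v)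
  adj_iff : ∀ u v : V, u ≠ v → (G.Adj u v ↔ (path u ∩ path v).Nonempty)

/-- `G` is a VPT graph: it has a VPT-representation on some finite host tree. -/
def IsVPT {V : Type*} (G : SimpleGraph V) : Prop :=
  ∃ (n : ℕ) (T : SimpleGraph (Fin n)), Nonempty (VPTRep G T)

/-- `G` belongs to the class [h,2,1]: it has a VPT-representation whose host tree has
maximum degree at most `h`. -/
def MemH21 {V : Type*} (G : SimpleGraph V) (h : ℕ) : Prop :=
  ∃ (n : ℕ) (T : SimpleGraph (Fin n)) (_ : VPTRep G T),
    ∀ x : Fin n, (T.neighborSet x).ncard ≤ h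

/-- `C` is a clique of `G`: a maximal set of pairwise adjacent vertices. -/
def IsMaxClique {V : Type*} (G : SimpleGraph V) (C : Set V) : Prop :=
  G.IsClique C ∧ ∀ D, G.IsClique D → C ⊆ D → D = C

/-- The branch graph `B(G/C)`, as a graph on the vertex set of `G`; its relevant
vertices are those of `branchVerts G C`, all others are isolated. -/
def branchGraph {V : Type*} (G : SimpleGraph V) (C : Set V) : SimpleGraph V where
  Adj v w := v ∉ C ∧ w ∉ C ∧ v ≠ w ∧ ¬ G.Adj v w ∧
    (∃ u ∈ C, G.Adj u v ∧ G.Adj u w) ∧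
    (∃ v' ∈ C, G.Adj v' v ∧ ¬ G.Adj v' w) ∧
    (∃ w' ∈ C, G.Adj w' w ∧ ¬ G.Adj w' v)
  symm := by
    constructor
    rintro v w ⟨h1, h2, h3, h4, ⟨u, hu, hu1, hu2⟩, ⟨v', hv', hv1, hv2⟩, ⟨w', hw', hw1, hw2⟩⟩
    exact ⟨h2, h1, h3.symm, fun hadj => h4 hadj.symm, ⟨u, hu, hu2, hu1⟩,
      ⟨w', hw', hw1, hw2⟩, ⟨v', hv', hv1, hv2⟩⟩
  loopless := by constructor; rintro v ⟨_, _, h, _⟩; exact h rfl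

/-- The vertex set of the branch graph `B(G/C)`: vertices outside `C` adjacent to
some vertex of `C`. -/
def branchVerts {V : Type*} (G : SimpleGraph V) (C : Set V) : Set V :=
  {v | v ∉ C ∧ ∃ u ∈ C, G.Adj u v}

/-- `B` is a branch of `T` at `q`: a connected component of `T - q`, i.e. the set of
vertices reachable from some neighbor `y` of `q` by a walk avoiding `q`. -/
def BranchAt {W : Type*} (T : SimpleGraph W) (q : W) (B : Set W) : Prop :=
  ∃ y, T.Adj q y ∧ B = {x | ∃ p : T.Walk y x, q ∉ p.support}

/-- `(S, K)` is a split partition of `G`: `S` is a stable set, `K` is a complete set,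
and they partition the vertices. -/
def IsSplitPartition {V : Type*} (G : SimpleGraph V) (S K : Set V) : Prop :=
  (∀ v, v ∈ S ∨ v ∈ K) ∧ Disjoint S K ∧
  (∀ a ∈ S, ∀ b ∈ S, ¬ G.Adj a b) ∧ G.IsClique K

/-- The split graph `Aₙ`: stable set `{sᵢ} = {Sum.inl i : i}`, central clique
`K = {v_{ij}} = {Sum.inr ⟨(i,j),_⟩ : i < j}`, where the neighbors of `v_{ij}` outside
`K` are exactly `sᵢ` and `sⱼ`. -/
def AGraph (n : ℕ) : SimpleGraph (Fin n ⊕ {p : Fin n × Fin n // p.1 < p.2}) :=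
  SimpleGraph.fromRel (fun a b =>
    match a, b with
    | Sum.inr _, Sum.inr _ => True
    | Sum.inl i, Sum.inr p => p.1.1 = i ∨ p.1.2 = i
    | _, _ => False)

/-!
By the Helly property of subtrees of a tree, the paths representing the central clique `K` of
`Aₙ` share a vertex `q` of the host tree. If `v` and `w` are adjacent in `B(Aₙ/K)`, then `P_v`
and `P_w` lie in different components of `T - q`: the path `P_u` of a common neighbour `u ∈ K`
contains `q` and meets both, so as it is a path, one of `P_v`, `P_w` (say `P_v`) lies between `q`
and the other; but then the path of the vertex of `K` that sees `w` and not `v` must cross `P_v`.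
Since `B(Aₙ/K)` is `Kₙ`, the vertex `q` has degree at least `n`. A star with `n` leaves gives
the representation of degree `n`.
-/

namespace SimpleGraph

namespace Walk

variable {V : Type*} {G : SimpleGraph V}

theorem IsPath.append {u v w : V} {p : G.Walk u v} {q : G.Walk v w} (hp : p.IsPath)
    (hq : q.IsPath) (h : ∀ z ∈ p.support, z ∈ q.support → z = v) : (p.append q).IsPath := by
  have hq' := hq.support_nodup
  rw [← cons_tail_support, List.nodup_cons] at hq'
  rw [isPath_def, support_append]
  refine hp.support_nodup.append hq'.2 fun z hzp hzq ↦ ?_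
  obtain rfl := h z hzp (List.mem_of_mem_tail hzq)
  exact hq'.1 hzq

theorem exists_isPath_first_mem (X : Set V) {a q : V} (r : G.Walk a q) (hq : q ∈ X) :
    ∃ m ∈ X, ∃ r' : G.Walk a m, r'.IsPath ∧ ∀ z ∈ r'.support, z ∈ X → z = m := by
  classical
  suffices ∃ m ∈ X, ∃ r' : G.Walk a m, ∀ z ∈ r'.support, z ∈ X → z = m by
    obtain ⟨m, hm, r', h⟩ := this
    exact ⟨m, hm, r'.bypass, r'.bypass_isPath,
      fun z hz ↦ h z (r'.support_bypass_subset_support hz)⟩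
  induction r with
  | nil => exact ⟨_, hq, nil, by simp_all⟩
  | @cons a _ _ hadj _ ih =>
    by_cases ha : a ∈ X
    · exact ⟨a, ha, nil, by simp_all⟩
    · obtain ⟨m, hm, r', h⟩ := ih hq
      refine ⟨m, hm, cons hadj r', fun z hz hzX ↦ ?_⟩
      rcases List.mem_cons.mp hz with rfl | hz
      · exact absurd hzX ha
      · exact h z hz hzX

/-- `m` is the first vertex of `p` reached from `c`; it splits `p` into two paths out of `c`. -/
theorem IsPath.exists_isPath_append [DecidableEq V] {u w c : V} {p : G.Walk u w} (hp : p.IsPath)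
    (r₀ : G.Walk c u) :
    ∃ m, ∃ hm : m ∈ p.support, ∃ r : G.Walk c m,
      (∀ z ∈ r.support, z ∈ p.support → z = m) ∧
      (r.append (p.takeUntil m hm).reverse).IsPath ∧ (r.append (p.dropUntil m hm)).IsPath := by
  obtain ⟨m, hm, r, hr, hfirst⟩ :=
    exists_isPath_first_mem {z | z ∈ p.support} r₀ p.start_mem_support
  refine ⟨m, hm, r, hfirst, hr.append (hp.takeUntil hm).reverse ?_,
    hr.append (hp.dropUntil hm) ?_⟩
  · intro z hz hz'
    rw [support_reverse, List.mem_reverse] at hz'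
    exact hfirst z hz (p.support_takeUntil_subset_support hm hz')
  · exact fun z hz hz' ↦ hfirst z hz (p.support_dropUntil_subset_support hm hz')

end Walk

theorem Reachable.exists_adj_walk_notMem_support {V : Type*} {G : SimpleGraph V} {q x : V}
    (h : G.Reachable q x) (hne : q ≠ x) :
    ∃ y, G.Adj q y ∧ ∃ p : G.Walk y x, q ∉ p.support := by
  classical
  obtain ⟨p⟩ := h
  have hp := p.bypass_isPath
  cases hb : p.bypass with
  | nil => exact absurd rfl hne
  | cons hadj p' =>
    rw [hb, Walk.cons_isPath_iff] at hp
    exact ⟨_, hadj, p', hp.2⟩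

variable {W : Type*} {T : SimpleGraph W}

def IsWalkConnected (T : SimpleGraph W) (S : Set W) : Prop :=
  ∀ x ∈ S, ∀ y ∈ S, ∃ p : T.Walk x y, ∀ z ∈ p.support, z ∈ S

theorem IsTree.support_subset_of_isPath (hT : T.IsTree) {x y : W} {p : T.Walk x y}
    (hp : p.IsPath) (w : T.Walk x y) : p.support ⊆ w.support := by
  classical
  rw [(hT.existsUnique_path x y).unique hp w.bypass_isPath]
  exact w.support_bypass_subset_support

theorem IsWalkConnected.support_subset {S : Set W} (hS : T.IsWalkConnected S) (hT : T.IsTree)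
    {x y : W} (hx : x ∈ S) (hy : y ∈ S) {p : T.Walk x y} (hp : p.IsPath) :
    ∀ z ∈ p.support, z ∈ S := by
  obtain ⟨w, hw⟩ := hS x hx y hy
  exact fun z hz ↦ hw z (hT.support_subset_of_isPath hp w hz)

theorem IsWalkConnected.inter {A B : Set W} (hA : T.IsWalkConnected A)
    (hB : T.IsWalkConnected B) (hT : T.IsTree) : T.IsWalkConnected (A ∩ B) := by
  intro x hx y hy
  obtain ⟨p, hp⟩ := (hT.existsUnique_path x y).exists
  exact ⟨p, fun z hz ↦ ⟨hA.support_subset hT hx.1 hy.1 hp z hz,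
    hB.support_subset hT hx.2 hy.2 hp z hz⟩⟩

theorem IsTree.inter_inter_nonempty (hT : T.IsTree) {A B C : Set W}
    (hA : T.IsWalkConnected A) (hB : T.IsWalkConnected B) (hC : T.IsWalkConnected C)
    (hAB : (A ∩ B).Nonempty) (hBC : (B ∩ C).Nonempty) (hAC : (A ∩ C).Nonempty) :
    (A ∩ B ∩ C).Nonempty := by
  classical
  obtain ⟨a, haA, haB⟩ := hAB
  obtain ⟨b, hbB, hbC⟩ := hBC
  obtain ⟨c, hcA, hcC⟩ := hAC
  obtain ⟨p, hp⟩ := (hT.existsUnique_path a b).exists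
  obtain ⟨m, hm, r, -, hca, hcb⟩ := hp.exists_isPath_append (hT.connected c a).some
  have hmr : m ∈ r.support := r.end_mem_support
  exact ⟨m, ⟨hA.support_subset hT hcA haA hca m (Walk.support_subset_support_append_left _ _ hmr),
      hB.support_subset hT haB hbB hp m hm⟩,
    hC.support_subset hT hcC hbC hcb m (Walk.support_subset_support_append_left _ _ hmr)⟩

theorem IsTree.exists_forall_mem_of_pairwise_inter_nonempty (hT : T.IsTree) {ι : Type*}
    (s : Finset ι) (F : ι → Set W) (hF : ∀ i ∈ s, T.IsWalkConnected (F i))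
    (hs : ∀ i ∈ s, ∀ j ∈ s, (F i ∩ F j).Nonempty) : ∃ q, ∀ i ∈ s, q ∈ F i := by
  classical
  induction s using Finset.induction_on generalizing F with
  | empty => exact ⟨hT.connected.nonempty.some, by simp⟩
  | @insert a s _ ih =>
    have ha := s.mem_insert_self a
    have hFa := hF a ha
    rcases s.eq_empty_or_nonempty with rfl | ⟨i₀, hi₀⟩
    · obtain ⟨x, hx, -⟩ := hs a ha a ha
      exact ⟨x, by simpa using hx⟩
    obtain ⟨q, hq⟩ := ih (fun i ↦ F a ∩ F i)
      (fun i hi ↦ hFa.inter (hF i (Finset.mem_insert_of_mem hi)) hT)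
      fun i hi j hj ↦ by
        have hi' := Finset.mem_insert_of_mem (s := s) (b := a) hi
        have hj' := Finset.mem_insert_of_mem (s := s) (b := a) hj
        obtain ⟨z, ⟨hzi, hza⟩, hzj⟩ := hT.inter_inter_nonempty (hF i hi') hFa (hF j hj')
          (hs i hi' a ha) (hs a ha j hj') (hs i hi' j hj')
        exact ⟨z, ⟨hza, hzi⟩, hza, hzj⟩
    refine ⟨q, fun i hi ↦ ?_⟩
    rcases Finset.mem_insert.mp hi with rfl | hi
    · exact (hq i₀ hi₀).1
    · exact (hq i hi).2

theorem IsTree.mem_of_mem_support_of_notMem (hT : T.IsTree) {Y S : Set W}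
    (hY : T.IsWalkConnected Y) (hS : T.IsWalkConnected S) {q b y z : W} (hb : b ∈ Y)
    (hq : q ∈ S) (hyS : y ∈ S) (hyY : y ∈ Y) {p : T.Walk q b}
    (hp : p.IsPath) (hz : z ∈ p.support) (hzY : z ∉ Y) : z ∈ S := by
  obtain ⟨w₁, hw₁⟩ := hS q hq y hyS
  obtain ⟨w₂, hw₂⟩ := hY y hyY b hb
  rcases (Walk.mem_support_append_iff _ _).mp (hT.support_subset_of_isPath hp (w₁.append w₂) hz)
    with h | h
  · exact hw₁ z h
  · exact absurd (hw₂ z h) hzY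

end SimpleGraph

namespace IsPathSet

variable {W : Type*} [Finite W] {T : SimpleGraph W} {S : Set W}

theorem eq_or_eq_or_eq_of_adj (hS : IsPathSet T S) {x y₁ y₂ y₃ : W} (hx : x ∈ S)
    (h₁ : y₁ ∈ S) (h₂ : y₂ ∈ S) (h₃ : y₃ ∈ S) (a₁ : T.Adj x y₁) (a₂ : T.Adj x y₂)
    (a₃ : T.Adj x y₃) : y₁ = y₂ ∨ y₁ = y₃ ∨ y₂ = y₃ := by
  by_contra! h
  have h3 : 2 < (T.neighborSet x ∩ S).ncard := (Set.two_lt_ncard_iff (Set.toFinite _)).mpr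
    ⟨y₁, y₂, y₃, ⟨a₁, h₁⟩, ⟨a₂, h₂⟩, ⟨a₃, h₃⟩, h.1, h.2.1, h.2.2⟩
  have h2 := hS.2.2 x hx
  omega

theorem exists_isPath_mem_support (hS : IsPathSet T S) (hT : T.IsTree) {q a b : W}
    (hq : q ∈ S) (ha : a ∈ S) (hb : b ∈ S) :
    (∃ p : T.Walk a b, p.IsPath ∧ q ∈ p.support) ∨
      (∃ p : T.Walk q b, p.IsPath ∧ a ∈ p.support) ∨
      (∃ p : T.Walk q a, p.IsPath ∧ b ∈ p.support) := by
  classical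
  have hSc : T.IsWalkConnected S := hS.2.1
  obtain ⟨p, hp⟩ := (hT.existsUnique_path q b).exists
  obtain ⟨m, hm, r, hfirst, hqa, hab⟩ := hp.exists_isPath_append (hT.connected a q).some
  have hmr := Walk.support_subset_support_append_left r (p.dropUntil m hm) r.end_mem_support
  by_cases hmq : m = q
  · subst hmq
    exact Or.inl ⟨_, hab, hmr⟩
  by_cases hma : m = a
  · subst hma
    exact Or.inr (Or.inl ⟨p, hp, hm⟩)
  by_cases hmb : m = b
  · subst hmb
    exact Or.inr (Or.inr ⟨_, hqa.reverse, by simp⟩)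
  exfalso
  -- `m` would have three neighbours in `S`: towards `a`, towards `q` and towards `b`.
  set pt := p.takeUntil m hm
  set pd := p.dropUntil m hm
  have hrn : ¬ r.Nil := Walk.not_nil_of_ne (Ne.symm hma)
  have hptn : ¬ pt.Nil := Walk.not_nil_of_ne (Ne.symm hmq)
  have hpdn : ¬ pd.Nil := Walk.not_nil_of_ne hmb
  have hpS := hSc.support_subset hT hq hb hp
  have h₁ : r.penultimate ∈ r.support := r.getVert_mem_support _
  have h₂ : pt.penultimate ∈ p.support :=
    p.support_takeUntil_subset_support hm (pt.getVert_mem_support _)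
  have h₃ : pd.snd ∈ p.support := p.support_dropUntil_subset_support hm (pd.getVert_mem_support 1)
  have hrS := hSc.support_subset hT ha hb hab _ (Walk.support_subset_support_append_left _ _ h₁)
  have hpath : (pt.append pd).IsPath := by rw [p.take_spec hm]; exact hp
  rcases hS.eq_or_eq_or_eq_of_adj (hpS m hm) hrS (hpS _ h₂) (hpS _ h₃)
    (Walk.adj_penultimate hrn).symm (Walk.adj_penultimate hptn).symm (Walk.adj_snd hpdn)
    with h | h | h
  · exact (Walk.adj_penultimate hrn).ne (hfirst _ h₁ (h ▸ h₂))
  · exact (Walk.adj_penultimate hrn).ne (hfirst _ h₁ (h ▸ h₃))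
  · exact hpath.ne_of_mem_support_of_append (Walk.adj_snd hpdn).ne.symm
      (pt.getVert_mem_support _) (pd.getVert_mem_support 1) h

end IsPathSet

namespace VPTRep

variable {V W : Type*} {G : SimpleGraph V} {T : SimpleGraph W} (R : VPTRep G T)

theorem path_inter_nonempty_of_adj {u v : V} (h : G.Adj u v) : (R.path u ∩ R.path v).Nonempty :=
  (R.adj_iff u v h.ne).mp h

theorem exists_forall_mem_path_of_isClique {C : Set V} (hC : C.Finite) (hCc : G.IsClique C) :
    ∃ q, ∀ u ∈ C, q ∈ R.path u := by
  obtain ⟨q, hq⟩ := R.tree.exists_forall_mem_of_pairwise_inter_nonempty hC.toFinset R.path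
    (fun u _ ↦ (R.isPath u).2.1) fun u hu v hv ↦ by
      rw [Set.Finite.mem_toFinset] at hu hv
      rcases eq_or_ne u v with rfl | huv
      · simpa using (R.isPath u).1
      · exact R.path_inter_nonempty_of_adj (hCc hu hv huv)
  exact ⟨q, fun u hu ↦ hq u (hC.mem_toFinset.mpr hu)⟩

variable {C : Set V} {q : W}

theorem notMem_path_of_branchGraph_adj (hq : ∀ u ∈ C, q ∈ R.path u) {v w : V}
    (h : (branchGraph G C).Adj v w) : q ∉ R.path v := by
  obtain ⟨hv, -, -, -, -, -, w', hw'C, -, hw'v⟩ := h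
  exact fun hqv ↦ hw'v ((R.adj_iff w' v fun e ↦ hv (e ▸ hw'C)).mpr ⟨q, hq w' hw'C, hqv⟩)

/-- Otherwise the path of the vertex `w'` of `C` seeing `w` but not `v` would have to cross
`P_v` on its way from `q` to `P_w`. -/
theorem notMem_support_of_branchGraph_adj (hq : ∀ u ∈ C, q ∈ R.path u) {v w : V}
    (h : (branchGraph G C).Adj v w) {a b : W} (ha : a ∈ R.path v) (hb : b ∈ R.path w)
    {p : T.Walk q b} (hp : p.IsPath) : a ∉ p.support := by
  obtain ⟨hv, hw, hvw, hnadj, -, -, w', hw'C, hw'w, hw'v⟩ := h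
  intro hap
  have haw : a ∉ R.path w := fun haw ↦ hnadj ((R.adj_iff v w hvw).mpr ⟨a, ha, haw⟩)
  obtain ⟨y, hyw', hyw⟩ := R.path_inter_nonempty_of_adj hw'w
  have haw' := R.tree.mem_of_mem_support_of_notMem (R.isPath w).2.1 (R.isPath w').2.1 hb
    (hq w' hw'C) hyw' hyw hp hap haw
  exact hw'v ((R.adj_iff w' v fun e ↦ hv (e ▸ hw'C)).mpr ⟨a, haw', ha⟩)

theorem not_exists_walk_of_branchGraph_adj [Finite W] (hq : ∀ u ∈ C, q ∈ R.path u) {v w : V}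
    (h : (branchGraph G C).Adj v w) :
    ¬ ∃ x ∈ R.path v, ∃ y ∈ R.path w, ∃ p : T.Walk x y, q ∉ p.support := by
  rintro ⟨x, hx, y, hy, p, hpq⟩
  obtain ⟨u, huC, huv, huw⟩ := h.2.2.2.2.1
  obtain ⟨a, hau, hav⟩ := R.path_inter_nonempty_of_adj huv
  obtain ⟨b, hbu, hbw⟩ := R.path_inter_nonempty_of_adj huw
  rcases (R.isPath u).exists_isPath_mem_support R.tree (hq u huC) hau hbu with
    ⟨r, hr, hqr⟩ | ⟨r, hr, har⟩ | ⟨r, hr, hbr⟩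
  · obtain ⟨wa, hwa⟩ := (R.isPath v).2.1 a hav x hx
    obtain ⟨wb, hwb⟩ := (R.isPath w).2.1 y hy b hbw
    have hqv := R.notMem_path_of_branchGraph_adj hq h
    have hqw := R.notMem_path_of_branchGraph_adj hq h.symm
    have := R.tree.support_subset_of_isPath hr (wa.append (p.append wb)) hqr
    simp only [Walk.mem_support_append_iff] at this
    rcases this with h' | h' | h'
    exacts [hqv (hwa q h'), hpq h', hqw (hwb q h')]
  · exact R.notMem_support_of_branchGraph_adj hq h hav hbw hr har
  · exact R.notMem_support_of_branchGraph_adj hq h.symm hbw hav hr hbr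

/-- Each `P_v` is reached from `q` through a neighbour of `q`, and by
`not_exists_walk_of_branchGraph_adj` these neighbours are pairwise distinct. -/
theorem ncard_le_ncard_neighborSet [Finite W] (hq : ∀ u ∈ C, q ∈ R.path u) {s : Set V}
    (hs : s.Pairwise (branchGraph G C).Adj) (hs' : s.Nontrivial) :
    s.ncard ≤ (T.neighborSet q).ncard := by
  have hentry : ∀ v, ∃ y, v ∈ s →
      T.Adj q y ∧ ∃ x ∈ R.path v, ∃ p : T.Walk y x, q ∉ p.support := by
    intro v
    by_cases hv : v ∈ s
    · obtain ⟨w, hw, hwv⟩ := hs'.exists_ne v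
      have hqv := R.notMem_path_of_branchGraph_adj hq (hs hv hw hwv.symm)
      obtain ⟨x, hx⟩ := (R.isPath v).1
      obtain ⟨y, hqy, p, hp⟩ := (R.tree.connected q x).exists_adj_walk_notMem_support
        fun e ↦ hqv (e ▸ hx)
      exact ⟨y, fun _ ↦ ⟨hqy, x, hx, p, hp⟩⟩
    · exact ⟨q, fun h ↦ absurd h hv⟩
  choose f hf using hentry
  refine Set.ncard_le_ncard_of_injOn f (fun v hv ↦ (hf v hv).1) fun v hv w hw hfvw ↦ ?_
  by_contra hvw
  obtain ⟨-, x, hx, p, hp⟩ := hf v hv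
  obtain ⟨-, y, hy, p', hp'⟩ := hf w hw
  refine R.not_exists_walk_of_branchGraph_adj hq (hs hv hw hvw)
    ⟨x, hx, y, hy, p.reverse.append (p'.copy hfvw.symm rfl), ?_⟩
  simp only [Walk.mem_support_append_iff, Walk.support_reverse, List.mem_reverse,
    Walk.support_copy]
  exact fun h ↦ h.elim hp hp'

end VPTRep

theorem isPathSet_singleton {W : Type*} (T : SimpleGraph W) (x : W) : IsPathSet T {x} := by
  refine ⟨Set.singleton_nonempty x, ?_, fun y _ ↦ ?_⟩
  · rintro _ rfl _ rfl
    exact ⟨Walk.nil, by simp⟩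
  · exact (Set.ncard_le_ncard Set.inter_subset_right).trans (by simp)

theorem isPathSet_starGraph {W : Type*} (r a b : W) : IsPathSet (starGraph r) {r, a, b} := by
  have hwalk : ∀ x ∈ ({r, a, b} : Set W), ∃ p : (starGraph r).Walk x r,
      ∀ z ∈ p.support, z ∈ ({r, a, b} : Set W) := by
    intro x hx
    by_cases hxr : x = r
    · subst hxr
      exact ⟨Walk.nil, by simp⟩
    · exact ⟨(starGraph_center_adj' (Ne.symm hxr)).toWalk, by simp_all⟩
  refine ⟨⟨r, by simp⟩, fun x hx y hy ↦ ?_, fun x hx ↦ ?_⟩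
  · obtain ⟨p, hp⟩ := hwalk x hx
    obtain ⟨p', hp'⟩ := hwalk y hy
    refine ⟨p.append p'.reverse, fun z hz ↦ ?_⟩
    rw [Walk.mem_support_append_iff, Walk.support_reverse, List.mem_reverse] at hz
    exact hz.elim (hp z) (hp' z)
  · by_cases hxr : x = r
    · subst hxr
      refine (Set.ncard_le_ncard (t := {a, b}) ?_).trans
        ((Set.ncard_insert_le a {b}).trans (by simp))
      rintro z ⟨hz, rfl | hz'⟩
      · exact ((starGraph z).irrefl hz).elim
      · exact hz'
    · refine (Set.ncard_le_ncard (t := {r}) ?_).trans (by simp)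
      rintro z ⟨hz, -⟩
      simpa [hxr] using hz.2

theorem SimpleGraph.ncard_neighborSet_le {n : ℕ} (G : SimpleGraph (Fin (n + 1)))
    (x : Fin (n + 1)) : (G.neighborSet x).ncard ≤ n := by
  refine (Set.ncard_le_ncard (t := {x}ᶜ) fun y hy ↦ (G.ne_of_adj hy).symm).trans ?_
  rw [Set.ncard_compl, Set.ncard_singleton, Nat.card_eq_fintype_card, Fintype.card_fin]
  omega

section AGraph

variable {n : ℕ}

theorem aGraph_adj_inr_inr (σ τ : {p : Fin n × Fin n // p.1 < p.2}) :
    (AGraph n).Adj (Sum.inr σ) (Sum.inr τ) ↔ σ ≠ τ := by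
  simp [AGraph]

theorem aGraph_adj_inl_inr (i : Fin n) (σ : {p : Fin n × Fin n // p.1 < p.2}) :
    (AGraph n).Adj (Sum.inl i) (Sum.inr σ) ↔ σ.1.1 = i ∨ σ.1.2 = i := by
  simp [AGraph]

theorem aGraph_not_adj_inl_inl (i j : Fin n) : ¬ (AGraph n).Adj (Sum.inl i) (Sum.inl j) := by
  simp [AGraph]

theorem aGraph_isClique_range_inr :
    (AGraph n).IsClique (Set.range (Sum.inr : {p : Fin n × Fin n // p.1 < p.2} → _)) := by
  rintro _ ⟨σ, rfl⟩ _ ⟨τ, rfl⟩ hne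
  exact (aGraph_adj_inr_inr σ τ).mpr fun h ↦ hne (h ▸ rfl)

/-- The vertex `v_{ij}` of the central clique, for `i ≠ j` in either order. -/
def pairVertex (i j : Fin n) (h : i ≠ j) : {p : Fin n × Fin n // p.1 < p.2} :=
  ⟨(min i j, max i j), min_lt_max.mpr h⟩

theorem aGraph_adj_inl_pairVertex (k i j : Fin n) (h : i ≠ j) :
    (AGraph n).Adj (Sum.inl k) (Sum.inr (pairVertex i j h)) ↔ i = k ∨ j = k := by
  rw [aGraph_adj_inl_inr]
  rcases le_total i j with hij | hij <;> simp [pairVertex, hij, or_comm]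

theorem branchVerts_aGraph (hn : 2 ≤ n) :
    branchVerts (AGraph n) (Set.range Sum.inr) = Set.range Sum.inl := by
  ext v
  constructor
  · rintro ⟨hv, -⟩
    rcases v with i | σ
    · exact ⟨i, rfl⟩
    · exact absurd ⟨σ, rfl⟩ hv
  · rintro ⟨i, rfl⟩
    have : Nontrivial (Fin n) := Fin.nontrivial_iff_two_le.mpr hn
    obtain ⟨k, hki⟩ := exists_ne i
    refine ⟨fun ⟨_, h⟩ ↦ Sum.inr_ne_inl h, _, ⟨pairVertex i k hki.symm, rfl⟩, ?_⟩
    exact ((aGraph_adj_inl_pairVertex i i k hki.symm).mpr (Or.inl rfl)).symm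

theorem branchGraph_aGraph_adj (hn : 3 ≤ n) (i j : Fin n) :
    (branchGraph (AGraph n) (Set.range Sum.inr)).Adj (Sum.inl i) (Sum.inl j) ↔ i ≠ j := by
  refine ⟨fun h e ↦ h.2.2.1 (e ▸ rfl), fun hij ↦ ?_⟩
  obtain ⟨k, hki, hkj⟩ := Fin.exists_ne_and_ne_of_two_lt i j hn
  have hK (l : Fin n) :
      Sum.inl l ∉ Set.range (Sum.inr : {p : Fin n × Fin n // p.1 < p.2} → _) := by simp
  refine ⟨hK i, hK j, fun e ↦ hij (Sum.inl_injective e), aGraph_not_adj_inl_inl i j,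
    ⟨_, ⟨pairVertex i j hij, rfl⟩, ?_⟩, ⟨_, ⟨pairVertex i k hki.symm, rfl⟩, ?_⟩,
    ⟨_, ⟨pairVertex j k hkj.symm, rfl⟩, ?_⟩⟩ <;>
    simp only [(AGraph n).adj_comm (Sum.inr _), aGraph_adj_inl_pairVertex] <;> grind

end AGraph

/-- `Aₙ` on the star with centre `0` and leaves `i.succ`: `sᵢ` is the leaf `i.succ` and
`v_{ij}` the path through the centre between the leaves `i.succ` and `j.succ`. -/
def starRep (n : ℕ) : VPTRep (AGraph n) (starGraph (0 : Fin (n + 1))) where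
  tree := isTree_starGraph 0
  path := Sum.elim (fun i ↦ {i.succ}) fun σ ↦ {0, σ.1.1.succ, σ.1.2.succ}
  isPath := by
    rintro (i | σ)
    exacts [isPathSet_singleton _ _, isPathSet_starGraph _ _ _]
  adj_iff := by
    rintro (i | σ) (j | τ) hne
    · simp_all [aGraph_not_adj_inl_inl]
    · simp [aGraph_adj_inl_inr, Fin.succ_ne_zero, eq_comm]
    · simp [(AGraph n).adj_comm (Sum.inr σ), aGraph_adj_inl_inr, Fin.succ_ne_zero, eq_comm]
    · simp_all [aGraph_adj_inr_inr, Set.inter_nonempty]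

theorem memH21_aGraph (n : ℕ) : MemH21 (AGraph n) n :=
  ⟨n + 1, _, starRep n, (starGraph 0).ncard_neighborSet_le⟩

/-- For `n ≥ 4`, the branch graph `B(Aₙ/K)` of `Aₙ` for its central
clique `K` is the complete graph `Kₙ` on the vertex set `{s₁, …, sₙ}`, and
consequently `Aₙ ∈ [n,2,1] - [n-1,2,1]`. -/
theorem stmt13 (n : ℕ) (hn : 4 ≤ n) :
    (branchVerts (AGraph n) (Set.range Sum.inr)
        = Set.range (Sum.inl : Fin n → Fin n ⊕ {p : Fin n × Fin n // p.1 < p.2}) ∧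
      (∀ i j : Fin n,
        (branchGraph (AGraph n) (Set.range Sum.inr)).Adj (Sum.inl i) (Sum.inl j) ↔ i ≠ j)) ∧
    (MemH21 (AGraph n) n ∧ ¬ MemH21 (AGraph n) (n - 1)) := by
  have hadj := branchGraph_aGraph_adj (by omega : 3 ≤ n)
  refine ⟨⟨branchVerts_aGraph (by omega), hadj⟩, memH21_aGraph n, ?_⟩
  rintro ⟨m, T, R, hdeg⟩
  obtain ⟨q, hq⟩ :=
    R.exists_forall_mem_path_of_isClique (Set.finite_range _) aGraph_isClique_range_inr
  have hK : (Set.range (Sum.inl : Fin n → Fin n ⊕ {p : Fin n × Fin n // p.1 < p.2})).Pairwise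
      (branchGraph (AGraph n) (Set.range Sum.inr)).Adj := by
    rintro _ ⟨i, rfl⟩ _ ⟨j, rfl⟩ hij
    exact (hadj i j).mpr fun h ↦ hij (h ▸ rfl)
  have : Nontrivial (Fin n) := Fin.nontrivial_iff_two_le.mpr (by omega)
  have hle := R.ncard_le_ncard_neighborSet hq hK
    (by rw [← Set.image_univ]; exact Set.nontrivial_univ.image Sum.inl_injective)
  rw [Set.ncard_range_of_injective Sum.inl_injective, Nat.card_eq_fintype_card,
    Fintype.card_fin] at hle
  have := hdeg q
  omega
end

section
/- Let T_2^3 be the spider graph consisting of a central vertex and three edge-disjoint paths of two edges each, pairwise intersecting only in the central vertex. Then T_2^3 is a VPT graph and B(T_2^3/C) is 2-colorable for every clique C of T_2^3, yet T_2^3 does not belong to [2,2,1] (i.e., T_2^3 is not an interval graph). -/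
open SimpleGraph

/-- The spider `T₂³`: a central vertex `0` and three edge-disjoint paths of two edges
each (`0-1-2`, `0-3-4`, `0-5-6`) pairwise intersecting only in the central vertex. -/
def spider : SimpleGraph (Fin 7) :=
  SimpleGraph.fromRel (fun a b =>
    (a, b) ∈ ([(0, 1), (1, 2), (0, 3), (3, 4), (0, 5), (5, 6)] : List (Fin 7 × Fin 7)))

/-!
In a tree of maximum degree at most 2, one of any three vertices separates the other two:
otherwise their median would have three distinct neighbours. Take `a`, `b`, `c` in the
intersections of the path of the centre `0` with those of its neighbours `1`, `3`, `5`. If,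
say, `b` separates `a` from `c`, the connected set `P₃ ∋ b`, which avoids `a` and `c`, is trapped
inside `P₀`; but `P₄` meets `P₃` and not `P₀`. Without the degree bound `T₂³` is represented on
itself, and since it is triangle-free all its branch graphs are edgeless.
-/

namespace SimpleGraph

variable {W : Type*} {T : SimpleGraph W} {a b c m x y : W}

def Between (T : SimpleGraph W) (a b c : W) : Prop := ∀ p : T.Walk a c, b ∈ p.support

lemma Between.symm (h : T.Between a b c) : T.Between c b a := fun p => by
  simpa using h p.reverse

lemma Between.dist_add_dist (hT : T.Connected) (h : T.Between a b c) :
    T.dist a b + T.dist b c = T.dist a c := by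
  classical
  obtain ⟨p, hp⟩ := hT.exists_walk_length_eq_dist a c
  refine le_antisymm ?_ hT.dist_triangle
  rw [← hp, ← p.take_spec (h p), Walk.length_append]
  exact add_le_add (dist_le _) (dist_le _)

lemma Between.eq_of_between (hT : T.Connected) (h₁ : T.Between a b c) (h₂ : T.Between b a c) :
    a = b := by
  have h₁' := h₁.dist_add_dist hT
  have h₂' := h₂.dist_add_dist hT
  rw [dist_comm] at h₂'
  exact ((hT a b).dist_eq_zero_iff).mp (by omega)

lemma Between.not_between_of_walk (hT : T.Connected) (h : T.Between a b c) (w : T.Walk x b)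
    (hw : a ∉ w.support) : ¬ T.Between x a c := by
  intro hx
  have hab : a ≠ b := fun hab => hw (hab ▸ w.end_mem_support)
  obtain ⟨u, hu⟩ : ∃ u : T.Walk b c, a ∉ u.support := by
    by_contra! hba
    exact hab (h.eq_of_between hT hba)
  rcases (Walk.mem_support_append_iff w u).mp (hx (w.append u)) with ha | ha
  exacts [hw ha, hu ha]

lemma IsAcyclic.between_of_mem_support (hT : T.IsAcyclic) {p : T.Walk a c} (hp : p.IsPath)
    (hb : b ∈ p.support) : T.Between a b c := fun q => by
  classical
  have hq : q.bypass = p :=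
    congrArg Subtype.val ((hT.subsingleton_path a c).elim ⟨_, q.bypass_isPath⟩ ⟨p, hp⟩)
  exact q.support_bypass_subset_support (hq ▸ hb)

def Walk.MeetOnlyAtEnd (p : T.Walk x m) (q : T.Walk y m) : Prop :=
  ∀ z ∈ p.support, z ∈ q.support → z = m

lemma Walk.MeetOnlyAtEnd.penultimate_ne {p : T.Walk x m} {q : T.Walk y m}
    (h : p.MeetOnlyAtEnd q) (hp : ¬ p.Nil) : p.penultimate ≠ q.penultimate := fun heq =>
  (Walk.adj_penultimate hp).ne
    (h _ (p.getVert_mem_support _) (heq ▸ q.getVert_mem_support _))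

lemma Walk.IsPath.append_reverse {p : T.Walk x m} {q : T.Walk y m} (hp : p.IsPath)
    (hq : q.IsPath) (h : p.MeetOnlyAtEnd q) : (p.append q.reverse).IsPath := by
  have hr := hq.reverse
  rw [Walk.isPath_def, ← q.reverse.cons_tail_support, List.nodup_cons] at hr
  rw [Walk.isPath_def, Walk.support_append, List.nodup_append]
  refine ⟨hp.support_nodup, hr.2, fun z hzp z' hzq hzz' => hr.1 ?_⟩
  subst hzz'
  have hzq' : z ∈ q.support := by
    rw [← List.mem_reverse, ← Walk.support_reverse]; exact List.mem_of_mem_tail hzq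
  exact h z hzp hzq' ▸ hzq

lemma IsAcyclic.between_of_meetOnlyAtEnd (hT : T.IsAcyclic) {p : T.Walk x m} {q : T.Walk y m}
    (hp : p.IsPath) (hq : q.IsPath) (h : p.MeetOnlyAtEnd q) : T.Between x m y :=
  hT.between_of_mem_support (hp.append_reverse hq h) (by simp)

lemma Walk.exists_walk_meeting_set_only_at_end (S : Set W) {u v : W} (p : T.Walk u v)
    (hv : v ∈ S) : ∃ m ∈ S, ∃ s : T.Walk u m, ∀ z ∈ s.support, z ∈ S → z = m := by
  classical
  induction p with
  | nil => exact ⟨_, hv, Walk.nil, by simp⟩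
  | @cons u _ _ h p ih =>
    by_cases hu : u ∈ S
    · exact ⟨u, hu, Walk.nil, by simp⟩
    · obtain ⟨m, hm, s, hs⟩ := ih hv
      refine ⟨m, hm, Walk.cons h s, ?_⟩
      simp only [Walk.support_cons, List.mem_cons, forall_eq_or_imp]
      exact ⟨fun hu' => (hu hu').elim, hs⟩

lemma IsTree.exists_median (hT : T.IsTree) (a b c : W) :
    ∃ m, ∃ (pa : T.Walk a m) (pb : T.Walk b m) (pc : T.Walk c m),
      pa.IsPath ∧ pb.IsPath ∧ pc.IsPath ∧
      pa.MeetOnlyAtEnd pb ∧ pa.MeetOnlyAtEnd pc ∧ pb.MeetOnlyAtEnd pc := by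
  classical
  obtain ⟨p, hp, -⟩ := hT.existsUnique_path a c
  obtain ⟨m, hm, s, hs⟩ := (hT.connected b a).some.exists_walk_meeting_set_only_at_end
    {z | z ∈ p.support} p.start_mem_support
  obtain ⟨q, r, hq, hr, rfl⟩ := hp.mem_support_iff_exists_append.mp hm
  have hs' : ∀ z ∈ s.bypass.support, z ∈ (q.append r).support → z = m :=
    fun z hz => hs z (s.support_bypass_subset_support hz)
  refine ⟨m, q, s.bypass, r.reverse, hq, s.bypass_isPath, hr.reverse, ?_, ?_, ?_⟩
  · exact fun z hzq hzs => hs' z hzs (Walk.mem_support_append_iff _ _ |>.mpr (.inl hzq))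
  · intro z hzq hzr
    by_contra hzm
    exact hp.ne_of_mem_support_of_append hzm hzq (by simpa using hzr) rfl
  · exact fun z hzs hzr =>
      hs' z hzs (Walk.mem_support_append_iff _ _ |>.mpr (.inr (by simpa using hzr)))

lemma IsTree.between_or_between_or_between (hT : T.IsTree)
    (hdeg : ∀ x, (T.neighborSet x).encard ≤ 2) :
    T.Between a b c ∨ T.Between b a c ∨ T.Between a c b := by
  obtain ⟨m, pa, pb, pc, hpa, hpb, hpc, hab', hac', hbc'⟩ := hT.exists_median a b c
  have hT' := hT.isAcyclic
  by_cases hma : m = a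
  · subst hma; exact .inr (.inl (hT'.between_of_meetOnlyAtEnd hpb hpc hbc'))
  by_cases hmb : m = b
  · subst hmb; exact .inl (hT'.between_of_meetOnlyAtEnd hpa hpc hac')
  by_cases hmc : m = c
  · subst hmc; exact .inr (.inr (hT'.between_of_meetOnlyAtEnd hpa hpb hab'))
  -- otherwise the median has three distinct neighbours
  have hna := Walk.not_nil_of_ne (p := pa) (Ne.symm hma)
  have hnb := Walk.not_nil_of_ne (p := pb) (Ne.symm hmb)
  have hnc := Walk.not_nil_of_ne (p := pc) (Ne.symm hmc)
  have h3 : ({pa.penultimate, pb.penultimate, pc.penultimate} : Set W).encard = 3 :=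
    Set.encard_eq_three.mpr ⟨_, _, _, hab'.penultimate_ne hna, hac'.penultimate_ne hna,
      hbc'.penultimate_ne hnb, rfl⟩
  have hsub : ({pa.penultimate, pb.penultimate, pc.penultimate} : Set W) ⊆ T.neighborSet m := by
    rintro z (rfl | rfl | rfl)
    exacts [(Walk.adj_penultimate hna).symm, (Walk.adj_penultimate hnb).symm,
      (Walk.adj_penultimate hnc).symm]
  have := (h3 ▸ Set.encard_le_encard hsub).trans (hdeg m)
  norm_num at this

lemma IsTree.subset_of_between (hT : T.IsTree) (hdeg : ∀ x, (T.neighborSet x).encard ≤ 2)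
    {Q B : Set W} (hQ : ∀ x ∈ Q, ∀ y ∈ Q, ∃ p : T.Walk x y, ∀ z ∈ p.support, z ∈ Q)
    (hB : ∀ x ∈ B, ∀ y ∈ B, ∃ p : T.Walk x y, ∀ z ∈ p.support, z ∈ B)
    (ha : a ∈ Q) (hc : c ∈ Q) (hb : b ∈ B) (haB : a ∉ B) (hcB : c ∉ B)
    (h : T.Between a b c) : B ⊆ Q := by
  intro x hx
  obtain ⟨w, hw⟩ := hB x hx b hb
  rcases hT.between_or_between_or_between hdeg (a := a) (b := x) (c := c) with h' | h' | h'
  · obtain ⟨p, hp⟩ := hQ a ha c hc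
    exact hp x (h' p)
  · exact (h.not_between_of_walk hT.connected w (fun ha' => haB (hw a ha')) h').elim
  · exact (h.symm.not_between_of_walk hT.connected w (fun hc' => hcB (hw c hc')) h'.symm).elim

lemma exists_walk_of_preconnected_induce {S : Set W} (hS : (T.induce S).Preconnected)
    {x y : W} (hx : x ∈ S) (hy : y ∈ S) : ∃ p : T.Walk x y, ∀ z ∈ p.support, z ∈ S := by
  obtain ⟨p⟩ := hS ⟨x, hx⟩ ⟨y, hy⟩
  refine ⟨p.map (Embedding.induce S).toHom, fun z hz => ?_⟩
  obtain ⟨z', -, rfl⟩ := List.mem_map.mp ((Walk.support_map _ _) ▸ hz)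
  exact z'.2

lemma isPathSet_of_isChain {l : List W} (hne : l ≠ []) (hl : l.IsChain T.Adj)
    (hlen : l.length ≤ 3) : IsPathSet T {z | z ∈ l} := by
  classical
  have hfin : {z | z ∈ l}.Finite := l.finite_toSet
  have hcard : {z | z ∈ l}.ncard ≤ 3 := by
    rw [← List.coe_toFinset, Set.ncard_coe_finset]
    exact l.toFinset_card_le.trans hlen
  have hconn := (Walk.ofSupport l hne hl).connected_induce_support
  rw [Walk.support_ofSupport] at hconn
  refine ⟨List.exists_mem_of_ne_nil l hne,
    fun x hx y hy => exists_walk_of_preconnected_induce hconn.preconnected hx hy,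
    fun x hx => ?_⟩
  calc (T.neighborSet x ∩ {z | z ∈ l}).ncard
      ≤ ({z | z ∈ l} \ {x}).ncard :=
        Set.ncard_le_ncard (fun y hy => ⟨hy.2, (T.ne_of_adj hy.1).symm⟩) hfin.sdiff
    _ = {z | z ∈ l}.ncard - 1 := Set.ncard_sdiff_singleton_of_mem hx
    _ ≤ 2 := by omega

end SimpleGraph

lemma VPTRep.not_between {V W : Type*} {G : SimpleGraph V} {T : SimpleGraph W} (R : VPTRep G T)
    (hdeg : ∀ x, (T.neighborSet x).encard ≤ 2) {z u u' : V} {a b c : W}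
    (ha : a ∈ R.path z) (hc : c ∈ R.path z) (hb : b ∈ R.path u) (haB : a ∉ R.path u)
    (hcB : c ∉ R.path u) (huu' : G.Adj u u') (hzu' : z ≠ u') (hnzu' : ¬ G.Adj z u') :
    ¬ T.Between a b c := fun h => by
  have hsub := R.tree.subset_of_between hdeg (R.isPath z).2.1 (R.isPath u).2.1 ha hc hb haB hcB h
  obtain ⟨d, hdu, hdu'⟩ := (R.adj_iff u u' huu'.ne).mp huu'
  exact hnzu' ((R.adj_iff z u' hzu').mpr ⟨d, hsub hdu, hdu'⟩)

lemma VPTRep.not_mem_of_not_adj {V W : Type*} {G : SimpleGraph V} {T : SimpleGraph W}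
    (R : VPTRep G T) {u v : V} (huv : u ≠ v) (h : ¬ G.Adj u v) {x : W} (hx : x ∈ R.path u) :
    x ∉ R.path v := fun hx' => h ((R.adj_iff u v huv).mpr ⟨x, hx, hx'⟩)

lemma branchGraph_eq_bot {V : Type*} {G : SimpleGraph V} {C : Set V} (hG : G.CliqueFree 3)
    (hC : G.IsClique C) : branchGraph G C = ⊥ := by
  classical
  ext v w
  simp only [bot_adj, iff_false]
  rintro ⟨-, -, -, -, ⟨u, hu, huv, huw⟩, ⟨v', hv', hv'v, hv'w⟩, ⟨w', hw', hw'w, hw'v⟩⟩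
  have huv' : u ≠ v' := fun h => hv'w (h ▸ huw)
  have huw' : u ≠ w' := fun h => hw'v (h ▸ huv)
  have hv'w' : v' ≠ w' := fun h => hw'v (h ▸ hv'v)
  exact hG {u, v', w'} (is3Clique_triple_iff.mpr
    ⟨hC hu hv' huv', hC hu hw' huw', hC hv' hw' hv'w'⟩)

instance : DecidableRel spider.Adj := fun a b => decidable_of_iff' _ (fromRel_adj _ a b)

lemma spider_isTree : spider.IsTree := by
  rw [isTree_iff_connected_and_card, connected_iff, Nat.card_eq_fintype_card,
    Nat.card_eq_fintype_card, ← edgeFinset_card]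
  exact ⟨⟨by decide, ⟨0⟩⟩, by decide⟩

def spiderPathList : Fin 7 → List (Fin 7) := ![[1, 0, 3], [1, 2], [2], [3, 4], [4], [0, 5], [5]]

def spiderSelfRep : VPTRep spider spider where
  tree := spider_isTree
  path v := {z | z ∈ spiderPathList v}
  isPath v := by
    have h : ∀ v, spiderPathList v ≠ [] ∧ (spiderPathList v).IsChain spider.Adj ∧
        (spiderPathList v).length ≤ 3 := by decide
    exact isPathSet_of_isChain (h v).1 (h v).2.1 (h v).2.2
  adj_iff := by
    simp only [Set.Nonempty, Set.mem_inter_iff]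
    decide

lemma spider_not_memH21 : ¬ MemH21 spider 2 := by
  rintro ⟨n, T, R, hdeg⟩
  have hdeg' : ∀ x, (T.neighborSet x).encard ≤ 2 := fun x => by
    rw [← (Set.toFinite _).cast_ncard_eq]; exact_mod_cast hdeg x
  have meet : ∀ u v, spider.Adj u v → (R.path u ∩ R.path v).Nonempty :=
    fun u v h => (R.adj_iff u v h.ne).mp h
  obtain ⟨a, ha0, ha1⟩ := meet 0 1 (by decide)
  obtain ⟨b, hb0, hb3⟩ := meet 0 3 (by decide)
  obtain ⟨c, hc0, hc5⟩ := meet 0 5 (by decide)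
  have ha3 : a ∉ R.path 3 := R.not_mem_of_not_adj (by decide) (by decide) ha1
  have ha5 : a ∉ R.path 5 := R.not_mem_of_not_adj (by decide) (by decide) ha1
  have hb1 : b ∉ R.path 1 := R.not_mem_of_not_adj (by decide) (by decide) hb3
  have hb5 : b ∉ R.path 5 := R.not_mem_of_not_adj (by decide) (by decide) hb3
  have hc1 : c ∉ R.path 1 := R.not_mem_of_not_adj (by decide) (by decide) hc5
  have hc3 : c ∉ R.path 3 := R.not_mem_of_not_adj (by decide) (by decide) hc5
  rcases R.tree.between_or_between_or_between hdeg' (a := a) (b := b) (c := c) with h | h | h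
  · exact R.not_between hdeg' ha0 hc0 hb3 ha3 hc3 (u' := 4) (by decide) (by decide) (by decide) h
  · exact R.not_between hdeg' hb0 hc0 ha1 hb1 hc1 (u' := 2) (by decide) (by decide) (by decide) h
  · exact R.not_between hdeg' ha0 hb0 hc5 ha5 hb5 (u' := 6) (by decide) (by decide) (by decide) h

/-- `T₂³` is a VPT graph and `B(T₂³/C)` is `2`-colorable for every
clique `C` of `T₂³`, yet `T₂³ ∉ [2,2,1]`. -/
theorem stmt14 :
    IsVPT spider ∧
    (∀ C : Set (Fin 7), IsMaxClique spider C → (branchGraph spider C).Colorable 2) ∧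
    ¬ MemH21 spider 2 := by
  refine ⟨⟨7, spider, ⟨spiderSelfRep⟩⟩, fun C hC => ?_, spider_not_memH21⟩
  rw [branchGraph_eq_bot (spider_isTree.isAcyclic.cliqueFree le_rfl) hC.1]
  exact isAcyclic_bot.colorable_two
end
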